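/- arXiv:2108.10411 — 2 statements merged into one kernel-verified Lean document; each statement's English description precedes it below -/
import Mathlib

section
/- Let K⁰, K¹, …, K^L be real symmetric positive definite n×n matrices, where K^l has smallest eigenvalue σ_{l,n} > 0, and let λ > 0. Define vectors d⁰ ∈ ℝⁿ arbitrary and d^{l+1} = (I − K^l (K^l + nλ I)^{-1}) d^l for l = 0, …, L. Then ‖d^{L+1}‖ ≤ (∏_{l=0}^{L} (1 − ε(l))) · ‖d⁰‖, where ε(l) = σ_{l,n} / (nλ + σ_{l,n}) and ‖·‖ is the Euclidean norm on ℝⁿ. -/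
/-- The Euclidean norm on `ℝⁿ`. -/
noncomputable def euclNorm {n : ℕ} (v : Fin n → ℝ) : ℝ :=
  Real.sqrt (∑ i, (v i) ^ 2)

/-!
Write `c = nλ`. Since `(K + c) (K + c)⁻¹ = 1`, the residual map is `1 - K (K + c)⁻¹ = c (K + c)⁻¹`.
If every eigenvalue of the symmetric matrix `K` is at least `σ`, then `K + c - (c + σ)` is
positive semidefinite, so by Cauchy–Schwarz
`(c + σ) ‖w‖² ≤ ⟪w, (K + c) w⟫ ≤ ‖w‖ ‖(K + c) w‖`, i.e. `‖(K + c)⁻¹ v‖ ≤ ‖v‖ / (c + σ)`.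
Hence level `l` contracts the residual by `c / (c + σ l) = 1 - ε(l)`, and the factors multiply
along the pyramid.
-/

open Matrix

lemma euclNorm_eq_norm_toLp {n : ℕ} (v : Fin n → ℝ) : euclNorm v = ‖WithLp.toLp 2 v‖ := by
  simp [euclNorm, EuclideanSpace.norm_eq]

lemma le_prod_mul_of_forall_le_mul {f r : ℕ → ℝ} {N : ℕ} (hr : ∀ l < N, 0 ≤ r l)
    (hf : ∀ l < N, f (l + 1) ≤ r l * f l) : f N ≤ (∏ l ∈ Finset.range N, r l) * f 0 := by
  induction N with
  | zero => simp
  | succ N ih =>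
    calc f (N + 1) ≤ r N * f N := hf N N.lt_succ_self
      _ ≤ r N * ((∏ l ∈ Finset.range N, r l) * f 0) := by
        gcongr
        · exact hr N N.lt_succ_self
        · exact ih (fun l hl => hr l (hl.trans N.lt_succ_self))
            (fun l hl => hf l (hl.trans N.lt_succ_self))
      _ = (∏ l ∈ Finset.range (N + 1), r l) * f 0 := by rw [Finset.prod_range_succ]; ring

namespace Matrix

variable {ι α : Type*} [Fintype ι] [DecidableEq ι]

lemma one_sub_mul_inv_add_smul_one [CommRing α] (K : Matrix ι ι α) (c : α)
    (h : IsUnit (K + c • 1).det) : 1 - K * (K + c • 1)⁻¹ = c • (K + c • 1)⁻¹ := by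
  nth_rw 1 [← mul_nonsing_inv _ h]
  rw [add_mul, smul_mul_assoc, one_mul, add_sub_cancel_left]

open scoped MatrixOrder in
lemma IsHermitian.posSemidef_sub_smul_one {A : Matrix ι ι ℝ} (hA : A.IsHermitian) {μ : ℝ}
    (hμ : ∀ i, μ ≤ hA.eigenvalues i) : (A - μ • 1).PosSemidef := by
  have : algebraMap ℝ _ μ ≤ A := by
    rw [algebraMap_le_iff_le_spectrum hA.isSelfAdjoint, hA.spectrum_real_eq_range_eigenvalues]
    rintro _ ⟨i, rfl⟩
    exact hμ i
  rwa [le_iff, Algebra.algebraMap_eq_smul_one] at this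

lemma PosSemidef.mul_norm_le_norm_mulVec {A : Matrix ι ι ℝ} {μ : ℝ} (h : (A - μ • 1).PosSemidef)
    (x : ι → ℝ) : μ * ‖WithLp.toLp 2 x‖ ≤ ‖WithLp.toLp 2 (A *ᵥ x)‖ := by
  have hμA : μ * (x ⬝ᵥ x) ≤ x ⬝ᵥ A *ᵥ x := by
    have := h.dotProduct_mulVec_nonneg x
    rwa [sub_mulVec, dotProduct_sub, smul_mulVec, one_mulVec, dotProduct_smul, smul_eq_mul,
      star_trivial, sub_nonneg] at this
  have hquad : μ * ‖WithLp.toLp 2 x‖ ^ 2 ≤ ‖WithLp.toLp 2 x‖ * ‖WithLp.toLp 2 (A *ᵥ x)‖ :=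
    calc μ * ‖WithLp.toLp 2 x‖ ^ 2 = μ * (x ⬝ᵥ x) := by
          rw [← real_inner_self_eq_norm_sq, EuclideanSpace.inner_toLp_toLp, star_trivial]
      _ ≤ x ⬝ᵥ A *ᵥ x := hμA
      _ = inner ℝ (WithLp.toLp 2 x) (WithLp.toLp 2 (A *ᵥ x)) := by
          rw [EuclideanSpace.inner_toLp_toLp, star_trivial, dotProduct_comm]
      _ ≤ ‖WithLp.toLp 2 x‖ * ‖WithLp.toLp 2 (A *ᵥ x)‖ := real_inner_le_norm _ _
  rcases (norm_nonneg (WithLp.toLp 2 x)).eq_or_lt with h0 | hpos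
  · rw [← h0, mul_zero]
    exact norm_nonneg _
  · nlinarith

lemma IsHermitian.norm_one_sub_mul_inv_add_smul_one_mulVec_le {K : Matrix ι ι ℝ}
    (hK : K.IsHermitian) {σ c : ℝ} (hσ : ∀ i, σ ≤ hK.eigenvalues i) (hc : 0 ≤ c)
    (hσc : 0 < c + σ) (v : ι → ℝ) :
    ‖WithLp.toLp 2 ((1 - K * (K + c • 1)⁻¹) *ᵥ v)‖ ≤ c / (c + σ) * ‖WithLp.toLp 2 v‖ := by
  set M := K + c • 1
  have hM : (M - (c + σ) • 1).PosSemidef := by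
    convert hK.posSemidef_sub_smul_one hσ using 1
    simp only [M, add_smul]; abel
  have hMdet : IsUnit M.det := by
    rw [← isUnit_iff_isUnit_det]
    simpa using ((PosDef.one.smul hσc).add_posSemidef hM).isUnit
  have hMinv : (c + σ) * ‖WithLp.toLp 2 (M⁻¹ *ᵥ v)‖ ≤ ‖WithLp.toLp 2 v‖ := by
    simpa [mulVec_mulVec, mul_nonsing_inv _ hMdet] using hM.mul_norm_le_norm_mulVec (M⁻¹ *ᵥ v)
  calc ‖WithLp.toLp 2 ((1 - K * M⁻¹) *ᵥ v)‖ = c * ‖WithLp.toLp 2 (M⁻¹ *ᵥ v)‖ := by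
        rw [one_sub_mul_inv_add_smul_one K c hMdet, smul_mulVec, WithLp.toLp_smul, norm_smul,
          Real.norm_of_nonneg hc]
    _ ≤ c * (‖WithLp.toLp 2 v‖ / (c + σ)) := by
        gcongr
        rwa [le_div_iff₀' hσc]
    _ = c / (c + σ) * ‖WithLp.toLp 2 v‖ := by ring

end Matrix

theorem lp_krr_convergence_general {n : ℕ} (L : ℕ) (lam : ℝ) (hlam : 0 < lam)
    (K : ℕ → Matrix (Fin n) (Fin n) ℝ)
    (hpd : ∀ l, l ≤ L → (K l).PosDef)
    (σ : ℕ → ℝ)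
    (hσ : ∀ l, (hl : l ≤ L) →
      IsLeast (Set.range (hpd l hl).1.eigenvalues) (σ l))
    (d : ℕ → (Fin n → ℝ))
    (hd : ∀ l ≤ L,
      d (l + 1) = (1 - K l * (K l + ((n : ℝ) * lam) • 1)⁻¹).mulVec (d l)) :
    euclNorm (d (L + 1)) ≤
      (∏ l ∈ Finset.range (L + 1), (1 - σ l / ((n : ℝ) * lam + σ l))) * euclNorm (d 0) := by
  have hc : 0 ≤ (n : ℝ) * lam := by positivity
  have hden : ∀ l ≤ L, 0 < (n : ℝ) * lam + σ l := fun l hl => by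
    obtain ⟨i, hi⟩ := (hσ l hl).1
    linarith [hi ▸ (hpd l hl).eigenvalues_pos i]
  have hfactor : ∀ l ≤ L, 1 - σ l / ((n : ℝ) * lam + σ l) = n * lam / (n * lam + σ l) :=
    fun l hl => by rw [one_sub_div (hden l hl).ne', add_sub_cancel_right]
  refine le_prod_mul_of_forall_le_mul (f := fun l => euclNorm (d l))
    (fun l hl => ?_) (fun l hl => ?_) <;> replace hl : l ≤ L := Nat.lt_succ_iff.mp hl
  · rw [hfactor l hl]
    exact div_nonneg hc (hden l hl).le
  · rw [hd l hl, hfactor l hl, euclNorm_eq_norm_toLp, euclNorm_eq_norm_toLp]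
    exact (hpd l hl).1.norm_one_sub_mul_inv_add_smul_one_mulVec_le (fun i => (hσ l hl).2 ⟨i, rfl⟩)
      hc (hden l hl) _

/-- Convergence of the Laplacian pyramid residuals (Theorem `LP_KRR_convergence`):
if `d^{l+1} = (I - K^l (K^l + nλI)⁻¹) d^l` and `σ l` is the smallest eigenvalue of the
symmetric positive definite matrix `K^l`, then
`‖d^{L+1}‖ ≤ ∏_{l=0}^{L} (1 - ε(l)) · ‖d⁰‖` with `ε(l) = σ l / (nλ + σ l)`. -/
theorem lp_krr_convergence {n : ℕ} (L : ℕ) (lam : ℝ) (hlam : 0 < lam)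
    (K : ℕ → Matrix (Fin n) (Fin n) ℝ)
    (hsymm : ∀ l ≤ L, (K l).IsSymm)
    (hpd : ∀ l, l ≤ L → (K l).PosDef)
    (σ : ℕ → ℝ)
    (hσpos : ∀ l ≤ L, 0 < σ l)
    (hσ : ∀ l, (hl : l ≤ L) →
      IsLeast (Set.range (hpd l hl).1.eigenvalues) (σ l))
    (d : ℕ → (Fin n → ℝ))
    (hd : ∀ l ≤ L,
      d (l + 1) = (1 - K l * (K l + ((n : ℝ) * lam) • 1)⁻¹).mulVec (d l)) :
    euclNorm (d (L + 1)) ≤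
      (∏ l ∈ Finset.range (L + 1), (1 - σ l / ((n : ℝ) * lam + σ l))) * euclNorm (d 0) :=
  lp_krr_convergence_general L lam hlam K hpd σ hσ d hd
end

section
/- Let C₁ > 0, C₂ > 0 and D > 0 be real constants, and define B : ℝ → ℝ by B(l) = C₁ · 2^{−Dl} · exp(−C₂ · 4^{−l}). Then B attains its global maximum at l* = (1/2) log₂(C₂ ln 4 / (D ln 2)), and B is strictly monotonically increasing on the interval (−∞, l*). -/
/-!
Writing `2^{-Dl} = exp(-(D log 2) l)` and `4^{-l} = exp(-(log 4) l)`, we get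
`B = C₁ exp ∘ g` with `g l = -(p l) - q exp(-(r l))`, where `p = D log 2`, `q = C₂` and
`r = log 4`.
Its derivative `q r exp(-(r l)) - p` is strictly decreasing and vanishes exactly at `l*`, so `g`,
hence `B`, strictly increases up to `l*` and strictly decreases after it.
-/

open Real Set

section LinearSubExp

variable {p q r l₀ : ℝ}

theorem hasDerivAt_neg_mul_sub_mul_exp (p q r l : ℝ) :
    HasDerivAt (fun x => -(p * x) - q * exp (-(r * x))) (q * r * exp (-(r * l)) - p) l := by
  have hlin (c : ℝ) : HasDerivAt (fun x => -(c * x)) (-c) l := by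
    have h := ((hasDerivAt_id' l).const_mul c).neg
    rw [mul_one] at h
    exact h
  exact ((hlin p).sub ((hlin r).exp.const_mul q)).congr_deriv (by ring)

theorem strictMonoOn_neg_mul_sub_mul_exp (hq : 0 < q) (hr : 0 < r)
    (hl₀ : q * r * exp (-(r * l₀)) = p) :
    StrictMonoOn (fun x => -(p * x) - q * exp (-(r * x))) (Iic l₀) := by
  refine strictMonoOn_of_deriv_pos (convex_Iic l₀) (by fun_prop) fun x hx => ?_
  rw [interior_Iic] at hx
  rw [(hasDerivAt_neg_mul_sub_mul_exp p q r x).deriv, sub_pos, ← hl₀]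
  gcongr
  exact hx

theorem strictAntiOn_neg_mul_sub_mul_exp (hq : 0 < q) (hr : 0 < r)
    (hl₀ : q * r * exp (-(r * l₀)) = p) :
    StrictAntiOn (fun x => -(p * x) - q * exp (-(r * x))) (Ici l₀) := by
  refine strictAntiOn_of_deriv_neg (convex_Ici l₀) (by fun_prop) fun x hx => ?_
  rw [interior_Ici] at hx
  rw [(hasDerivAt_neg_mul_sub_mul_exp p q r x).deriv, sub_neg, ← hl₀]
  gcongr
  exact hx

end LinearSubExp

/-- The eigenvalue lower bound `B(l) = C₁ 2^{-Dl} exp(-C₂ 4^{-l})` attains its global maximum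
at `l* = (1/2) log₂(C₂ ln 4/(D ln 2))` and is strictly increasing on `(-∞, l*)`. -/
theorem B_max_and_monotone (C₁ C₂ D : ℝ) (hC₁ : 0 < C₁) (hC₂ : 0 < C₂) (hD : 0 < D)
    (B : ℝ → ℝ)
    (hB : ∀ l : ℝ, B l = C₁ * (2 : ℝ) ^ (-(D * l)) * Real.exp (-C₂ * (4 : ℝ) ^ (-l))) :
    (∀ l : ℝ, B l ≤ B ((1 / 2) * Real.logb 2 (C₂ * Real.log 4 / (D * Real.log 2)))) ∧
      StrictMonoOn B
        (Set.Iio ((1 / 2) * Real.logb 2 (C₂ * Real.log 4 / (D * Real.log 2)))) := by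
  set l₀ := (1 / 2) * logb 2 (C₂ * log 4 / (D * log 2))
  have hlog2 : 0 < log 2 := log_pos one_lt_two
  have hlog4_pos : 0 < log 4 := by positivity
  have hlog4 : log 4 = 2 * log 2 := by
    rw [show (4 : ℝ) = 2 ^ 2 by norm_num, log_pow, Nat.cast_ofNat]
  have hB_comp :
      B = (fun y => C₁ * exp y) ∘ fun l => -(D * log 2 * l) - C₂ * exp (-(log 4 * l)) := by
    funext l
    rw [hB, rpow_def_of_pos two_pos, rpow_def_of_pos four_pos, Function.comp_apply, mul_assoc,
      ← exp_add]
    ring_nf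
  have hcrit : C₂ * log 4 * exp (-(log 4 * l₀)) = D * log 2 := by
    have : log 4 * l₀ = log (C₂ * log 4 / (D * log 2)) := by
      simp only [l₀, logb, hlog4]
      field_simp
    rw [this, exp_neg, exp_log (by positivity)]
    field_simp
  have hscale : StrictMono fun y => C₁ * exp y := fun _ _ h =>
    mul_lt_mul_of_pos_left (exp_lt_exp.2 h) hC₁
  have hmono : StrictMonoOn B (Iic l₀) :=
    hB_comp ▸ hscale.comp_strictMonoOn (strictMonoOn_neg_mul_sub_mul_exp hC₂ hlog4_pos hcrit)
  have hanti : StrictAntiOn B (Ici l₀) :=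
    hB_comp ▸ hscale.comp_strictAntiOn (strictAntiOn_neg_mul_sub_mul_exp hC₂ hlog4_pos hcrit)
  exact ⟨fun l => isMaxOn_univ_of_mono_anti hmono.monotoneOn hanti.antitoneOn (mem_univ l),
    hmono.mono Iio_subset_Iic_self⟩
end
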